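/- Let ξ, η ∈ ℝ² with 0 < |ξ| < |η|, let θ be the polar argument of ξ and φ the polar argument of η, and let V₁(ξ,η) = (ξ+η)^⊥/|ξ+η|² − η^⊥/|η|². Then ξ · V₁(ξ,η) = Σ_{n=2}^∞ (−1)^{n−1} (|ξ|^n/|η|^n) sin(n(θ−φ)). -/

import Mathlib

open Real MeasureTheory
open scoped Topology RealInnerProductSpace

noncomputable section

abbrev E2 := EuclideanSpace ℝ (Fin 2)

def perp (x : E2) : E2 := (WithLp.equiv 2 (Fin 2 → ℝ)).symm ![-(x 1), x 0]

/-- V₁(ξ,η) = (ξ+η)^⊥/|ξ+η|² − η^⊥/|η|². -/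
def V1 (ξ η : E2) : E2 := (‖ξ + η‖^2)⁻¹ • perp (ξ + η) - (‖η‖^2)⁻¹ • perp η

/-!
Identify ℝ² with ℂ through `x ↦ x₀ + x₁ i`. Then `⟪x, y^⊥ / |y|²⟫ = Im (x / y)`, so
`ξ · V₁(ξ, η) = Im (ξ / (ξ + η) - ξ / η) = Im (t / (1 + t) - t)` for `t = ξ / η`, and
`t = (|ξ| / |η|) e^{i(θ - φ)}` has modulus `< 1`. Expanding `t / (1 + t)` as a geometric
series and taking imaginary parts termwise gives the sine series.
-/

open Complex

def toComplex : E2 ≃ₗᵢ[ℝ] ℂ := orthonormalBasisOneI.repr.symm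

lemma toComplex_re (x : E2) : (toComplex x).re = x 0 := by
  simp [toComplex, orthonormalBasisOneI_repr_symm_apply]

lemma toComplex_im (x : E2) : (toComplex x).im = x 1 := by
  simp [toComplex, orthonormalBasisOneI_repr_symm_apply]

lemma inner_inv_norm_sq_smul_perp (x y : E2) :
    ⟪x, (‖y‖ ^ 2)⁻¹ • perp y⟫ = (toComplex x / toComplex y).im := by
  rw [div_im, normSq_eq_norm_sq, LinearIsometryEquiv.norm_map, real_inner_smul_right]
  simp [perp, PiLp.inner_apply, Fin.sum_univ_two, toComplex_re, toComplex_im]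
  ring

lemma inner_V1_eq_im (ξ η : E2) :
    ⟪ξ, V1 ξ η⟫ =
      (toComplex ξ / (toComplex ξ + toComplex η) - toComplex ξ / toComplex η).im := by
  rw [V1, inner_sub_right, inner_inv_norm_sq_smul_perp, inner_inv_norm_sq_smul_perp, map_add,
    sub_im]

lemma toComplex_eq_norm_mul_exp {x : E2} {θ : ℝ} (h0 : x 0 = ‖x‖ * Real.cos θ)
    (h1 : x 1 = ‖x‖ * Real.sin θ) : toComplex x = ‖x‖ * exp (θ * I) := by
  apply Complex.ext <;>
    simp only [toComplex_re, toComplex_im, re_ofReal_mul, im_ofReal_mul, exp_ofReal_mul_I_re,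
      exp_ofReal_mul_I_im, h0, h1]

lemma hasSum_div_add_sub_div {a b : ℂ} (h : ‖a‖ < ‖b‖) :
    HasSum (fun n : ℕ => (-1) ^ (n + 1) * (a / b) ^ (n + 2)) (a / (a + b) - a / b) := by
  have hb : b ≠ 0 := norm_pos_iff.1 ((norm_nonneg a).trans_lt h)
  have hab : a + b ≠ 0 := fun h0 => h.ne (by rw [eq_neg_of_add_eq_zero_left h0, norm_neg])
  have ht : ‖-(a / b)‖ < 1 := by
    rwa [norm_neg, norm_div, div_lt_one ((norm_nonneg a).trans_lt h)]
  have hsum : -(a / b) ^ 2 * (1 - -(a / b))⁻¹ = a / (a + b) - a / b := by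
    rw [sub_neg_eq_add, one_add_div hb, add_comm b a]
    field_simp
    ring
  have hgeom := (hasSum_geometric_of_norm_lt_one ht).mul_left (-(a / b) ^ 2)
  rw [hsum] at hgeom
  exact hgeom.congr_fun fun n => by ring

lemma im_ofReal_mul_exp_pow (q α : ℝ) (k : ℕ) :
    (((q : ℂ) * exp (α * I)) ^ k).im = q ^ k * Real.sin (k * α) := by
  rw [mul_pow, ← Complex.exp_nat_mul, ← mul_assoc, ← ofReal_pow, ← ofReal_natCast, ← ofReal_mul,
    im_ofReal_mul, exp_ofReal_mul_I_im]

theorem stmt0_general (ξ η : E2) (θ φ : ℝ)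
    (hlt : ‖ξ‖ < ‖η‖)
    (hθ0 : ξ 0 = ‖ξ‖ * Real.cos θ) (hθ1 : ξ 1 = ‖ξ‖ * Real.sin θ)
    (hφ0 : η 0 = ‖η‖ * Real.cos φ) (hφ1 : η 1 = ‖η‖ * Real.sin φ) :
    ⟪ξ, V1 ξ η⟫ =
      ∑' n : ℕ, (-1 : ℝ)^(n + 1) * (‖ξ‖ / ‖η‖)^(n + 2) *
        Real.sin ((n + 2 : ℕ) * (θ - φ)) := by
  have hquot : toComplex ξ / toComplex η = ((‖ξ‖ / ‖η‖ : ℝ) : ℂ) * exp ((θ - φ : ℝ) * I) := by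
    rw [toComplex_eq_norm_mul_exp hθ0 hθ1, toComplex_eq_norm_mul_exp hφ0 hφ1, mul_div_mul_comm,
      ← Complex.exp_sub]
    push_cast
    ring_nf
  have hlt' : ‖toComplex ξ‖ < ‖toComplex η‖ := by simpa only [LinearIsometryEquiv.norm_map]
  rw [inner_V1_eq_im, ← (hasSum_im (hasSum_div_add_sub_div hlt')).tsum_eq]
  congr 1 with n
  rw [hquot, show (-1 : ℂ) ^ (n + 1) = ((-1 : ℝ) ^ (n + 1) : ℝ) by push_cast; rfl,
    im_ofReal_mul, im_ofReal_mul_exp_pow, mul_assoc]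

theorem stmt0 (ξ η : E2) (θ φ : ℝ)
    (hξ : 0 < ‖ξ‖) (hlt : ‖ξ‖ < ‖η‖)
    (hθ0 : ξ 0 = ‖ξ‖ * Real.cos θ) (hθ1 : ξ 1 = ‖ξ‖ * Real.sin θ)
    (hφ0 : η 0 = ‖η‖ * Real.cos φ) (hφ1 : η 1 = ‖η‖ * Real.sin φ) :
    ⟪ξ, V1 ξ η⟫ =
      ∑' n : ℕ, (-1 : ℝ)^(n + 1) * (‖ξ‖ / ‖η‖)^(n + 2) *
        Real.sin ((n + 2 : ℕ) * (θ - φ)) :=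
  stmt0_general ξ η θ φ hlt hθ0 hθ1 hφ0 hφ1
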